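/- arXiv:1811.08291 — 2 statements merged into one kernel-verified Lean document; each statement's English description precedes it below -/
import Mathlib

section
/- (Proposition 2, good camp.) Fix any y¹, y² ∈ ℝⁿ and k_g > 0. The maximum of (x¹, x²) ↦ F(x¹, x², y¹, y²) over the feasible set {(x¹, x²) ∈ ℝⁿ × ℝⁿ : x¹_i ≥ 0 and x²_i ≥ 0 for all i, and Σ_i (x¹_i + x²_i) ≤ k_g} is attained, and it is attained at some point (x¹, x²) such that x¹ has at most one nonzero coordinate, x² has at most one nonzero coordinate, and either Σ_i (x¹_i + x²_i) = k_g or x¹ = x² = 0. -/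
/-!
For fixed `x²`, `F` is an affine function of `x¹`, and for fixed `x¹` an affine function of `x²`.
An affine function `z ↦ f 0 + z ⬝ᵥ p` on `{z ≥ 0, ∑ zᵢ ≤ T}` is maximised at `0` or at `T • eᵢ`
with `pᵢ` maximal. Starting from a maximiser, which exists by compactness, push `x¹` to such a
vertex within the budget left by `x²`, then `x²` within the budget left by the new `x¹`; if `x²`
lands at `0`, push `x¹` once more with the whole budget. `F` never decreases along the way, so the
end point is again a maximiser, and it has the required shape.
-/

/-- The two-phase objective function `F(x¹,x²,y¹,y²)` (the sum of final opinions). -/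
noncomputable def twoPhaseF (n : ℕ) (θ c r s : Fin n → ℝ)
    (b : Matrix (Fin n) (Fin n) ℝ) (x1 x2 y1 y2 : Fin n → ℝ) : ℝ :=
  (∑ i, ∑ j, c i * b j i)
  + (∑ j, x2 j * (θ j / 2) * ((∑ i, c i * b j i) + r j))
  + (∑ j, y2 j * (θ j / 2) * ((∑ i, c i * b j i) - r j))
  + (∑ i, x1 i * (θ i / 2) * (1 + c i) *
      (s i + ∑ j, (x2 j + y2 j) * (θ j / 2) * b j i))
  - (∑ i, y1 i * (θ i / 2) * (1 - c i) *
      (s i + ∑ j, (x2 j + y2 j) * (θ j / 2) * b j i))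

open Finset

section

variable {ι : Type*} [Fintype ι]

theorem sum_mul_add_sum_add_mul_eq_add_dotProduct (a S t u v : ι → ℝ) (b : ι → ι → ℝ) :
    ∑ i, a i * (S i + ∑ j, (u j + v j) * t j * b j i)
      = ∑ i, a i * (S i + ∑ j, v j * t j * b j i) + u ⬝ᵥ fun j => ∑ i, a i * (t j * b j i) := by
  calc ∑ i, a i * (S i + ∑ j, (u j + v j) * t j * b j i)
      = ∑ i, (a i * (S i + ∑ j, v j * t j * b j i) + ∑ j, u j * (a i * (t j * b j i))) := by
        refine sum_congr rfl fun i _ => ?_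
        simp only [add_mul, sum_add_distrib, mul_add, mul_sum]
        ring_nf
    _ = _ := by
        rw [sum_add_distrib, sum_comm]
        simp only [dotProduct, mul_sum]

def budgetSet (ι : Type*) [Fintype ι] (k : ℝ) : Set ((ι → ℝ) × (ι → ℝ)) :=
  {x | 0 ≤ x.1 ∧ 0 ≤ x.2 ∧ ∑ i, (x.1 i + x.2 i) ≤ k}

theorem isCompact_budgetSet (k : ℝ) : IsCompact (budgetSet ι k) := by
  have hclosed : IsClosed (budgetSet ι k) :=
    (isClosed_le continuous_const continuous_fst).inter
      ((isClosed_le continuous_const continuous_snd).inter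
        (isClosed_le (f := fun x : (ι → ℝ) × (ι → ℝ) => ∑ i, (x.1 i + x.2 i))
          (by fun_prop) continuous_const))
  have hbox : IsCompact (Set.univ.pi fun _ : ι => Set.Icc 0 k) :=
    isCompact_univ_pi fun _ => isCompact_Icc
  refine (hbox.prod hbox).of_isClosed_subset hclosed ?_
  rintro x ⟨h₁, h₂, hk⟩
  have hle : ∑ i, x.1 i + ∑ i, x.2 i ≤ k := by rwa [← sum_add_distrib]
  refine ⟨fun i _ => ⟨h₁ i, ?_⟩, fun i _ => ⟨h₂ i, ?_⟩⟩
  · linarith [single_le_sum (fun j _ => h₁ j) (mem_univ i), sum_nonneg fun j (_ : j ∈ univ) => h₂ j]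
  · linarith [single_le_sum (fun j _ => h₂ j) (mem_univ i), sum_nonneg fun j (_ : j ∈ univ) => h₁ j]

variable [DecidableEq ι]

theorem exists_zero_or_single_dotProduct_ge (p x : ι → ℝ) (hx : 0 ≤ x) {T : ℝ}
    (hT : ∑ i, x i ≤ T) :
    ∃ z, (z = 0 ∨ ∃ i, z = Pi.single i T) ∧ x ⬝ᵥ p ≤ z ⬝ᵥ p := by
  by_cases hp : ∀ i, p i ≤ 0
  · refine ⟨0, Or.inl rfl, ?_⟩
    rw [zero_dotProduct]
    exact sum_nonpos fun i _ => mul_nonpos_of_nonneg_of_nonpos (hx i) (hp i)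
  push Not at hp
  obtain ⟨i, hi⟩ := hp
  obtain ⟨i₀, -, hi₀⟩ := exists_max_image univ p ⟨i, mem_univ i⟩
  refine ⟨Pi.single i₀ T, Or.inr ⟨i₀, rfl⟩, ?_⟩
  rw [single_dotProduct]
  calc x ⬝ᵥ p ≤ ∑ i, x i * p i₀ :=
        sum_le_sum fun i _ => mul_le_mul_of_nonneg_left (hi₀ i (mem_univ i)) (hx i)
    _ = (∑ i, x i) * p i₀ := (sum_mul ..).symm
    _ ≤ T * p i₀ := mul_le_mul_of_nonneg_right hT ((hi.trans_le (hi₀ i (mem_univ i))).le)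

theorem exists_sparse_ge_of_affine (f : (ι → ℝ) → ℝ) (hf : ∃ p, ∀ z, f z = f 0 + z ⬝ᵥ p)
    {x : ι → ℝ} (hx : 0 ≤ x) {T : ℝ} (hT : ∑ i, x i ≤ T) :
    ∃ z, 0 ≤ z ∧ (Function.support z).Subsingleton ∧
      (∑ i, z i = T ∨ z = 0) ∧ f x ≤ f z := by
  obtain ⟨p, hp⟩ := hf
  have hT₀ : 0 ≤ T := (sum_nonneg fun i _ => hx i).trans hT
  obtain ⟨z, hz, hle⟩ := exists_zero_or_single_dotProduct_ge p x hx hT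
  have hfz : f x ≤ f z := by linarith [hp x, hp z]
  obtain rfl | ⟨i, rfl⟩ := hz
  · exact ⟨0, le_rfl, by simp, Or.inr rfl, hfz⟩
  · exact ⟨Pi.single i T, Pi.single_nonneg.2 hT₀, Pi.subsingleton_support_single,
      Or.inl (by simp), hfz⟩

theorem exists_sparse_ge_of_affine_left_right (G : (ι → ℝ) → (ι → ℝ) → ℝ)
    (hG₁ : ∀ x₂, ∃ p, ∀ x₁, G x₁ x₂ = G 0 x₂ + x₁ ⬝ᵥ p)
    (hG₂ : ∀ x₁, ∃ p, ∀ x₂, G x₁ x₂ = G x₁ 0 + x₂ ⬝ᵥ p)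
    {k : ℝ} {x : (ι → ℝ) × (ι → ℝ)} (hx : x ∈ budgetSet ι k) :
    ∃ z₁ z₂ : ι → ℝ, 0 ≤ z₁ ∧ 0 ≤ z₂ ∧
      (Function.support z₁).Subsingleton ∧ (Function.support z₂).Subsingleton ∧
      (∑ i, (z₁ i + z₂ i) = k ∨ z₁ = 0 ∧ z₂ = 0) ∧ G x.1 x.2 ≤ G z₁ z₂ := by
  obtain ⟨hx₁, hx₂, hk⟩ := hx
  rw [sum_add_distrib] at hk
  obtain ⟨z₁, hz₁, hs₁, hsum₁, hle₁⟩ :=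
    exists_sparse_ge_of_affine (G · x.2) (hG₁ x.2) hx₁ (T := k - ∑ i, x.2 i) (by linarith)
  have hz₁k : ∑ i, z₁ i ≤ k - ∑ i, x.2 i := by
    rcases hsum₁ with h | rfl
    · exact h.le
    · simp only [Pi.zero_apply, sum_const_zero, sub_nonneg]
      linarith [sum_nonneg fun i (_ : i ∈ univ) => hx₁ i]
  obtain ⟨z₂, hz₂, hs₂, hsum₂ | rfl, hle₂⟩ :=
    exists_sparse_ge_of_affine (G z₁ ·) (hG₂ z₁) hx₂ (T := k - ∑ i, z₁ i) (by linarith)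
  · exact ⟨z₁, z₂, hz₁, hz₂, hs₁, hs₂, Or.inl (by rw [sum_add_distrib, hsum₂]; ring),
      hle₁.trans hle₂⟩
  -- once `x₂` has been pushed to `0`, the budget left unspent by `x₁` is free again
  obtain ⟨w, hw, hsw, hsumw, hle₃⟩ :=
    exists_sparse_ge_of_affine (G · 0) (hG₁ 0) hz₁ (T := k)
      (by linarith [sum_nonneg fun i (_ : i ∈ univ) => hx₂ i])
  refine ⟨w, 0, hw, le_rfl, hsw, by simp, ?_, hle₁.trans (hle₂.trans hle₃)⟩
  rcases hsumw with h | rfl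
  · exact Or.inl (by simpa using h)
  · exact Or.inr ⟨rfl, rfl⟩

end

theorem twoPhaseF_affine_left (n : ℕ) (θ c r s : Fin n → ℝ) (b : Matrix (Fin n) (Fin n) ℝ)
    (x2 y1 y2 : Fin n → ℝ) :
    ∃ p, ∀ x1, twoPhaseF n θ c r s b x1 x2 y1 y2 = twoPhaseF n θ c r s b 0 x2 y1 y2 + x1 ⬝ᵥ p :=
  ⟨fun i => θ i / 2 * (1 + c i) * (s i + ∑ j, (x2 j + y2 j) * (θ j / 2) * b j i), fun x1 => by
    simp only [twoPhaseF, dotProduct, Pi.zero_apply, zero_mul, sum_const_zero, mul_assoc]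
    ring⟩

theorem twoPhaseF_affine_right (n : ℕ) (θ c r s : Fin n → ℝ) (b : Matrix (Fin n) (Fin n) ℝ)
    (x1 y1 y2 : Fin n → ℝ) :
    ∃ p, ∀ x2, twoPhaseF n θ c r s b x1 x2 y1 y2 = twoPhaseF n θ c r s b x1 0 y1 y2 + x2 ⬝ᵥ p := by
  let aGood i := x1 i * (θ i / 2) * (1 + c i)
  let aBad i := y1 i * (θ i / 2) * (1 - c i)
  refine ⟨(fun j => θ j / 2 * ((∑ i, c i * b j i) + r j))
    + (fun j => ∑ i, aGood i * (θ j / 2 * b j i)) - (fun j => ∑ i, aBad i * (θ j / 2 * b j i)),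
    fun x2 => ?_⟩
  have hGood := sum_mul_add_sum_add_mul_eq_add_dotProduct aGood s (fun j => θ j / 2) x2 y2 b
  have hBad := sum_mul_add_sum_add_mul_eq_add_dotProduct aBad s (fun j => θ j / 2) x2 y2 b
  simp only [twoPhaseF, dotProduct_add, dotProduct_sub, Pi.zero_apply, zero_add, aGood, aBad]
    at hGood hBad ⊢
  rw [hGood, hBad]
  simp only [dotProduct, zero_mul, sum_const_zero, mul_assoc]
  ring

theorem continuous_twoPhaseF (n : ℕ) (θ c r s : Fin n → ℝ) (b : Matrix (Fin n) (Fin n) ℝ)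
    (y1 y2 : Fin n → ℝ) :
    Continuous fun x : (Fin n → ℝ) × (Fin n → ℝ) => twoPhaseF n θ c r s b x.1 x.2 y1 y2 := by
  unfold twoPhaseF
  fun_prop

theorem prop2_good_camp_general (n : ℕ)
    (θ : Fin n → ℝ)
    (r : Fin n → ℝ)
    (c : Fin n → ℝ)
    (b : Matrix (Fin n) (Fin n) ℝ)
    (s : Fin n → ℝ)
    (y1 y2 : Fin n → ℝ)
    (kg : ℝ) (hkg : 0 < kg) :
    ∃ x1 x2 : Fin n → ℝ,
      (∀ i, 0 ≤ x1 i) ∧ (∀ i, 0 ≤ x2 i) ∧ (∑ i, (x1 i + x2 i)) ≤ kg ∧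
      (∀ x1' x2' : Fin n → ℝ,
        (∀ i, 0 ≤ x1' i) → (∀ i, 0 ≤ x2' i) → (∑ i, (x1' i + x2' i)) ≤ kg →
        twoPhaseF n θ c r s b x1' x2' y1 y2 ≤ twoPhaseF n θ c r s b x1 x2 y1 y2) ∧
      (∀ i j, x1 i ≠ 0 → x1 j ≠ 0 → i = j) ∧
      (∀ i j, x2 i ≠ 0 → x2 j ≠ 0 → i = j) ∧
      ((∑ i, (x1 i + x2 i)) = kg ∨ (x1 = 0 ∧ x2 = 0)) := by
  obtain ⟨X, hX, hXmax⟩ := (isCompact_budgetSet kg).exists_isMaxOn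
    ⟨0, le_rfl, le_rfl, by simpa using hkg.le⟩ (continuous_twoPhaseF n θ c r s b y1 y2).continuousOn
  obtain ⟨x1, x2, hx1, hx2, hsupp1, hsupp2, hbudget, hle⟩ :=
    exists_sparse_ge_of_affine_left_right (fun x1 x2 => twoPhaseF n θ c r s b x1 x2 y1 y2)
      (twoPhaseF_affine_left n θ c r s b · y1 y2) (twoPhaseF_affine_right n θ c r s b · y1 y2) hX
  refine ⟨x1, x2, hx1, hx2, ?_, fun x1' x2' h1 h2 h3 =>
    (hXmax (a := (x1', x2')) ⟨h1, h2, h3⟩).trans hle,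
    fun _ _ => (hsupp1 · ·), fun _ _ => (hsupp2 · ·), hbudget⟩
  rcases hbudget with h | ⟨rfl, rfl⟩
  · exact h.le
  · simpa using hkg.le

/-- Proposition 2, good camp: for any fixed strategy `(y¹, y²)` of the
bad camp, the maximum of `(x¹,x²) ↦ F(x¹,x²,y¹,y²)` over the good camp's feasible set
is attained at a point where each phase's investment vector has at most one nonzero
coordinate, and either the entire budget is exhausted or nothing is invested. -/
theorem prop2_good_camp (n : ℕ) (hn : 0 < n)
    (W : Matrix (Fin n) (Fin n) ℝ)
    (hW : ∀ i, ∑ j, |W i j| < 1)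
    (w0 θ z0 : Fin n → ℝ)
    (Δ : Matrix (Fin n) (Fin n) ℝ) (hΔ : Δ = (1 - W)⁻¹)
    (r : Fin n → ℝ) (hr : ∀ i, r i = ∑ j, Δ j i)
    (c : Fin n → ℝ) (hc : ∀ i, c i = w0 i * z0 i)
    (b : Matrix (Fin n) (Fin n) ℝ) (hb : ∀ j i, b j i = r j * w0 j * Δ j i)
    (s : Fin n → ℝ) (hs : ∀ i, s i = ∑ j, b j i)
    (y1 y2 : Fin n → ℝ)
    (kg : ℝ) (hkg : 0 < kg) :
    ∃ x1 x2 : Fin n → ℝ,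
      (∀ i, 0 ≤ x1 i) ∧ (∀ i, 0 ≤ x2 i) ∧ (∑ i, (x1 i + x2 i)) ≤ kg ∧
      (∀ x1' x2' : Fin n → ℝ,
        (∀ i, 0 ≤ x1' i) → (∀ i, 0 ≤ x2' i) → (∑ i, (x1' i + x2' i)) ≤ kg →
        twoPhaseF n θ c r s b x1' x2' y1 y2 ≤ twoPhaseF n θ c r s b x1 x2 y1 y2) ∧
      (∀ i j, x1 i ≠ 0 → x1 j ≠ 0 → i = j) ∧
      (∀ i j, x2 i ≠ 0 → x2 j ≠ 0 → i = j) ∧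
      ((∑ i, (x1 i + x2 i)) = kg ∨ (x1 = 0 ∧ x2 = 0)) :=
  prop2_good_camp_general n θ r c b s y1 y2 kg hkg
end

section
/- (Convex-concave property under the paper's sign assumptions.) Suppose W_{ij} ≥ 0 for all i, j, and for all i: 0 ≤ w⁰_i ≤ 1, θ_i ≥ 0, and z⁰_i ∈ [−1, 1]. Fix nodes α, β, γ, δ and budgets k_g, k_b > 0, and define g(k₁, l₁) = F(k₁ e_α, (k_g − k₁) e_β, l₁ e_γ, (k_b − l₁) e_δ). Then for every fixed l₁, the function k₁ ↦ g(k₁, l₁) is concave on ℝ, and for every fixed k₁, the function l₁ ↦ g(k₁, l₁) is convex on ℝ. -/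
open Finset

namespace Matrix

section LinftyOp

attribute [local instance] Matrix.linftyOpNormedRing Matrix.linftyOpNormedAddCommGroup
  Matrix.linftyOpNormedSpace

variable {ι : Type*} [Fintype ι]

theorem linfty_opNorm_lt_one_of_sum_abs_lt_one {W : Matrix ι ι ℝ}
    (hW : ∀ i, ∑ j, |W i j| < 1) : ‖W‖ < 1 := by
  rw [linfty_opNorm_def, ← NNReal.coe_one, NNReal.coe_lt_coe]
  refine Finset.sup_lt_iff zero_lt_one |>.2 fun i _ => ?_
  rw [← NNReal.coe_lt_coe]
  simpa [Real.norm_eq_abs] using hW i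

theorem inv_one_sub_apply_nonneg [DecidableEq ι] {W : Matrix ι ι ℝ}
    (hW : ∀ i, ∑ j, |W i j| < 1) (hW_nonneg : ∀ i j, 0 ≤ W i j) (i j : ι) :
    0 ≤ (1 - W)⁻¹ i j := by
  have hnorm := linfty_opNorm_lt_one_of_sum_abs_lt_one hW
  have hneumann : HasSum (fun k : ℕ => W ^ k) (1 - W)⁻¹ := by
    rw [inv_eq_right_inv (mul_neg_geom_series W hnorm)]
    exact (summable_geometric_of_norm_lt_one hnorm).hasSum
  have hentry : HasSum (fun k : ℕ => (W ^ k) i j) ((1 - W)⁻¹ i j) :=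
    Pi.hasSum.1 (Pi.hasSum.1 hneumann i) j
  exact hentry.nonneg fun k => pow_apply_nonneg hW_nonneg k i j

end LinftyOp

end Matrix

/-- `hf` is the identity satisfied by every quadratic with leading coefficient `a`; in this form
`ring` checks it without the lower coefficients being named. -/
theorem convexOn_univ_of_chord_gap {f : ℝ → ℝ} {a : ℝ} (ha : 0 ≤ a)
    (hf : ∀ x y t, t * f x + (1 - t) * f y =
      f (t * x + (1 - t) * y) + a * (t * (1 - t) * (x - y) ^ 2)) :
    ConvexOn ℝ Set.univ f := by
  refine ⟨convex_univ, fun x _ y _ t u ht hu htu => ?_⟩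
  obtain rfl : u = 1 - t := by linarith
  have := hf x y t
  simp only [smul_eq_mul]
  nlinarith [mul_nonneg ha (mul_nonneg (mul_nonneg ht hu) (sq_nonneg (x - y)))]

theorem concaveOn_univ_of_chord_gap {f : ℝ → ℝ} {a : ℝ} (ha : 0 ≤ a)
    (hf : ∀ x y t, f (t * x + (1 - t) * y) =
      t * f x + (1 - t) * f y + a * (t * (1 - t) * (x - y) ^ 2)) :
    ConcaveOn ℝ Set.univ f :=
  neg_convexOn_iff.1 <| convexOn_univ_of_chord_gap ha fun x y t => by
    simp only [Pi.neg_apply, hf]; ring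

theorem twoPhaseF_ite_eq (n : ℕ) (θ c r s : Fin n → ℝ) (b : Matrix (Fin n) (Fin n) ℝ)
    (α β γ δ : Fin n) (x₁ x₂ y₁ y₂ : ℝ) :
    twoPhaseF n θ c r s b
        (fun i => if i = α then x₁ else 0) (fun i => if i = β then x₂ else 0)
        (fun i => if i = γ then y₁ else 0) (fun i => if i = δ then y₂ else 0) =
      (∑ i, ∑ j, c i * b j i)
      + x₂ * (θ β / 2) * ((∑ i, c i * b β i) + r β)
      + y₂ * (θ δ / 2) * ((∑ i, c i * b δ i) - r δ)
      + x₁ * (θ α / 2) * (1 + c α) * (s α + (x₂ * (θ β / 2) * b β α + y₂ * (θ δ / 2) * b δ α))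
      - y₁ * (θ γ / 2) * (1 - c γ) *
          (s γ + (x₂ * (θ β / 2) * b β γ + y₂ * (θ δ / 2) * b δ γ)) := by
  simp only [twoPhaseF, add_mul, ite_mul, zero_mul, sum_add_distrib, sum_ite_eq',
    mem_univ, if_true]

theorem convex_concave_two_camp_game_general (n : ℕ)
    (W : Matrix (Fin n) (Fin n) ℝ)
    (hW : ∀ i, ∑ j, |W i j| < 1)
    (hWnonneg : ∀ i j, 0 ≤ W i j)
    (w0 θ z0 : Fin n → ℝ)
    (hw0 : ∀ i, 0 ≤ w0 i ∧ w0 i ≤ 1)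
    (hθ : ∀ i, 0 ≤ θ i)
    (hz0 : ∀ i, -1 ≤ z0 i ∧ z0 i ≤ 1)
    (Δ : Matrix (Fin n) (Fin n) ℝ) (hΔ : Δ = (1 - W)⁻¹)
    (r : Fin n → ℝ) (hr : ∀ i, r i = ∑ j, Δ j i)
    (c : Fin n → ℝ) (hc : ∀ i, c i = w0 i * z0 i)
    (b : Matrix (Fin n) (Fin n) ℝ) (hb : ∀ j i, b j i = r j * w0 j * Δ j i)
    (s : Fin n → ℝ)
    (α β γ δ : Fin n) (kg kb : ℝ)
    (g : ℝ → ℝ → ℝ)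
    (hg : ∀ k₁ l₁ : ℝ, g k₁ l₁ =
      twoPhaseF n θ c r s b
        (fun i => if i = α then k₁ else 0)
        (fun i => if i = β then kg - k₁ else 0)
        (fun i => if i = γ then l₁ else 0)
        (fun i => if i = δ then kb - l₁ else 0)) :
    (∀ l₁ : ℝ, ConcaveOn ℝ Set.univ (fun k₁ => g k₁ l₁)) ∧
    (∀ k₁ : ℝ, ConvexOn ℝ Set.univ (fun l₁ => g k₁ l₁)) := by
  have hΔ_nonneg : ∀ j i, 0 ≤ Δ j i := hΔ ▸ Matrix.inv_one_sub_apply_nonneg hW hWnonneg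
  have hb_nonneg : ∀ j i, 0 ≤ b j i := fun j i => by
    rw [hb, hr]
    exact mul_nonneg (mul_nonneg (sum_nonneg fun k _ => hΔ_nonneg k j) (hw0 j).1) (hΔ_nonneg j i)
  have hc_abs : ∀ i, |c i| ≤ 1 := fun i => by
    rw [hc, abs_mul]
    exact mul_le_one₀ (abs_le.2 ⟨by linarith [(hw0 i).1], (hw0 i).2⟩) (abs_nonneg _)
      (abs_le.2 (hz0 i))
  have hθ_half : ∀ i, 0 ≤ θ i / 2 := fun i => div_nonneg (hθ i) zero_le_two
  simp only [hg, twoPhaseF_ite_eq]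
  constructor
  · refine fun l₁ => concaveOn_univ_of_chord_gap
      (a := θ α / 2 * (1 + c α) * (θ β / 2 * b β α)) ?_ fun _ _ _ => by ring
    exact mul_nonneg (mul_nonneg (hθ_half α) (neg_le_iff_add_nonneg'.1 (abs_le.1 (hc_abs α)).1))
      (mul_nonneg (hθ_half β) (hb_nonneg β α))
  · refine fun k₁ => convexOn_univ_of_chord_gap
      (a := θ γ / 2 * (1 - c γ) * (θ δ / 2 * b δ γ)) ?_ fun _ _ _ => by ring
    exact mul_nonneg (mul_nonneg (hθ_half γ) (sub_nonneg.2 (abs_le.1 (hc_abs γ)).2))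
      (mul_nonneg (hθ_half δ) (hb_nonneg δ γ))

/-- under the paper's sign assumptions, the restricted two-camp game
objective `g(k₁,l₁)` is concave in the good camp's first-phase budget `k₁` and
convex in the bad camp's first-phase budget `l₁`. -/
theorem convex_concave_two_camp_game (n : ℕ) (hn : 0 < n)
    (W : Matrix (Fin n) (Fin n) ℝ)
    (hW : ∀ i, ∑ j, |W i j| < 1)
    (hWnonneg : ∀ i j, 0 ≤ W i j)
    (w0 θ z0 : Fin n → ℝ)
    (hw0 : ∀ i, 0 ≤ w0 i ∧ w0 i ≤ 1)
    (hθ : ∀ i, 0 ≤ θ i)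
    (hz0 : ∀ i, -1 ≤ z0 i ∧ z0 i ≤ 1)
    (Δ : Matrix (Fin n) (Fin n) ℝ) (hΔ : Δ = (1 - W)⁻¹)
    (r : Fin n → ℝ) (hr : ∀ i, r i = ∑ j, Δ j i)
    (c : Fin n → ℝ) (hc : ∀ i, c i = w0 i * z0 i)
    (b : Matrix (Fin n) (Fin n) ℝ) (hb : ∀ j i, b j i = r j * w0 j * Δ j i)
    (s : Fin n → ℝ) (hs : ∀ i, s i = ∑ j, b j i)
    (α β γ δ : Fin n) (kg kb : ℝ) (hkg : 0 < kg) (hkb : 0 < kb)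
    (g : ℝ → ℝ → ℝ)
    (hg : ∀ k₁ l₁ : ℝ, g k₁ l₁ =
      twoPhaseF n θ c r s b
        (fun i => if i = α then k₁ else 0)
        (fun i => if i = β then kg - k₁ else 0)
        (fun i => if i = γ then l₁ else 0)
        (fun i => if i = δ then kb - l₁ else 0)) :
    (∀ l₁ : ℝ, ConcaveOn ℝ Set.univ (fun k₁ => g k₁ l₁)) ∧
    (∀ k₁ : ℝ, ConvexOn ℝ Set.univ (fun l₁ => g k₁ l₁)) :=
  convex_concave_two_camp_game_general n W hW hWnonneg w0 θ z0 hw0 hθ hz0 Δ hΔ r hr c hc b hb s α β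
    γ δ kg kb g hg
end
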